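/- For every natural number n ≥ 1, every monomial k^α·b^β·X^γ·Y^δ occurring in the support of G n satisfies: γ is odd, δ = 2^n − γ, and β = 2^{n−1} − (γ+1)/2. (That is, G n has the form Y·∑_{j=1}^{2^{n−1}} d_j·X^{2j−1}·Y^{2^n − 2j}·b^{2^{n−1} − j} with d_j ∈ ℤ[k].) -/

import Mathlib

/-
Both `F n` and `G n` are weighted homogeneous for any weight on `k, b, X, Y` compatible with
the recursion, since products and sums of weighted homogeneous polynomials of matching degrees
are again weighted homogeneous. The weight `deg_X + deg_Y` gives `G n` degree `2ⁿ`, and the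
weight `2 deg_b + deg_X` gives it degree `2ⁿ - 1`; for `n ≥ 1` the latter forces `deg_X` odd.
-/

open MvPolynomial

/-- The pair `(Fₙ, Gₙ)` in `ℤ[k, b, X, Y]` (variables `0 ↦ k`, `1 ↦ b`, `2 ↦ X`, `3 ↦ Y`),
defined by `F 1 = k (X² + b Y²)`, `G 1 = X Y`,
`F (n+1) = k ((F n)² + b (G n)²)`, `G (n+1) = (F n) (G n)`. -/
noncomputable def FG : ℕ → MvPolynomial (Fin 4) ℤ × MvPolynomial (Fin 4) ℤ
  | 0 => (0, 0)
  | 1 => (X 0 * (X 2 ^ 2 + X 1 * X 3 ^ 2), X 2 * X 3)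
  | n + 2 =>
      (X 0 * ((FG (n + 1)).1 ^ 2 + X 1 * (FG (n + 1)).2 ^ 2),
        (FG (n + 1)).1 * (FG (n + 1)).2)

noncomputable def F (n : ℕ) : MvPolynomial (Fin 4) ℤ := (FG n).1
noncomputable def G (n : ℕ) : MvPolynomial (Fin 4) ℤ := (FG n).2

lemma F_one : F 1 = X 0 * (X 2 ^ 2 + X 1 * X 3 ^ 2) := rfl

lemma G_one : G 1 = X 2 * X 3 := rfl

lemma F_succ {n : ℕ} (hn : 1 ≤ n) : F (n + 1) = X 0 * (F n ^ 2 + X 1 * G n ^ 2) := by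
  obtain ⟨k, rfl⟩ := Nat.exists_eq_add_of_le' hn
  rfl

lemma G_succ {n : ℕ} (hn : 1 ≤ n) : G (n + 1) = F n * G n := by
  obtain ⟨k, rfl⟩ := Nat.exists_eq_add_of_le' hn
  rfl

lemma isWeightedHomogeneous_F_G {M : Type*} [AddCommMonoid M] (w : Fin 4 → M) (dF dG : ℕ → M)
    (hF₁ : w 0 + 2 • w 2 = dF 1) (hG₁ : w 2 + w 3 = dG 1) (hb₁ : w 1 + 2 • w 3 = 2 • w 2)
    (hF : ∀ n, w 0 + 2 • dF n = dF (n + 1)) (hG : ∀ n, dF n + dG n = dG (n + 1))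
    (hb : ∀ n, w 1 + 2 • dG n = 2 • dF n) {n : ℕ} (hn : 1 ≤ n) :
    IsWeightedHomogeneous w (F n) (dF n) ∧ IsWeightedHomogeneous w (G n) (dG n) := by
  have hX (i : Fin 4) := isWeightedHomogeneous_X ℤ w i
  induction n, hn using Nat.le_induction with
  | base =>
    rw [F_one, G_one, ← hF₁, ← hG₁]
    refine ⟨(hX 0).mul (((hX 2).pow 2).add ?_), (hX 2).mul (hX 3)⟩
    exact hb₁ ▸ (hX 1).mul ((hX 3).pow 2)
  | succ n hn ih =>
    obtain ⟨ihF, ihG⟩ := ih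
    rw [F_succ hn, G_succ hn, ← hF, ← hG]
    refine ⟨(hX 0).mul ((ihF.pow 2).add ?_), ihF.mul ihG⟩
    exact hb n ▸ (hX 1).mul (ihG.pow 2)

lemma weight_fin_four {M : Type*} [AddCommMonoid M] (w : Fin 4 → M) (m : Fin 4 →₀ ℕ) :
    Finsupp.weight w m = m 0 • w 0 + m 1 • w 1 + m 2 • w 2 + m 3 • w 3 := by
  rw [Finsupp.weight_apply, Finsupp.sum_fintype _ _ (by simp), Fin.sum_univ_four]

lemma isWeightedHomogeneous_G_degXY {n : ℕ} (hn : 1 ≤ n) :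
    IsWeightedHomogeneous ![0, 0, 1, 1] (G n) (2 ^ n) :=
  (isWeightedHomogeneous_F_G ![0, 0, 1, 1] (2 ^ ·) (2 ^ ·) (by simp) (by simp) (by simp)
    (fun n ↦ by simp [pow_succ']) (fun n ↦ by simp [pow_succ, mul_two]) (fun n ↦ by simp) hn).2

lemma isWeightedHomogeneous_G_degbX {n : ℕ} (hn : 1 ≤ n) :
    IsWeightedHomogeneous ![0, 2, 1, 0] (G n) (2 ^ n - 1) :=
  (isWeightedHomogeneous_F_G ![0, 2, 1, 0] (2 ^ ·) (2 ^ · - 1) (by simp) (by simp) (by simp)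
    (fun n ↦ by simp [pow_succ'])
    (fun n ↦ by simp [pow_succ]; have := Nat.one_le_two_pow (n := n); omega)
    (fun n ↦ by simp; have := Nat.one_le_two_pow (n := n); omega) hn).2

/-- Every monomial `k^α b^β X^γ Y^δ` in the support of `G n` has `γ` odd,
`δ = 2^n - γ` and `β = 2^(n-1) - (γ+1)/2`. -/
theorem support_G_form (n : ℕ) (hn : 1 ≤ n) :
    ∀ m ∈ (G n).support,
      Odd (m 2) ∧ m 3 = 2 ^ n - m 2 ∧ m 1 = 2 ^ (n - 1) - (m 2 + 1) / 2 := by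
  intro m hm
  have hXY : m 2 + m 3 = 2 ^ n := by
    simpa [weight_fin_four] using isWeightedHomogeneous_G_degXY hn (mem_support_iff.mp hm)
  have hbX : 2 * m 1 + m 2 = 2 ^ n - 1 := by
    simpa [weight_fin_four, mul_comm] using
      isWeightedHomogeneous_G_degbX hn (mem_support_iff.mp hm)
  have hpow : 2 ^ n = 2 * 2 ^ (n - 1) := by
    rw [← pow_succ', Nat.sub_add_cancel hn]
  have hpos : 0 < 2 ^ (n - 1) := by positivity
  exact ⟨Nat.odd_iff.mpr (by omega), by omega, by omega⟩
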